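/- (Deterministic EF21 convergence, PL case.) In the setting of deterministic EF21, assume additionally that f satisfies the Polyak–Lojasiewicz condition f(x) - f(x*) ≤ (1/(2μ))||∇f(x)||² for all x, where x* minimizes f and μ > 0. Set θ = 1 - √(1-α), β = (1-α)/(1-√(1-α)), and pick stepsize 0 < γ ≤ min{ (L + L̃√(2β/θ))^{-1}, θ/(2μ) }. Define the Lyapunov function Ψ^t = f(x^t) - f(x*) + (γ/θ) G^t with G^t = (1/n)Σ_i ||g_i^t - ∇f_i(x^t)||². Then Ψ^T ≤ (1 - γμ)^T Ψ^0 for all T ≥ 0. -/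

import Mathlib

/-!
By the descent lemma, the step `x⁺ = x - γ ḡ` with the averaged estimator `ḡ` gives
`f x⁺ ≤ f x - γ/2 ‖∇f x‖² - (γ/2 - L γ²/2) ‖ḡ‖² + γ/2 G`, where `G` bounds `‖ḡ - ∇f x‖²` by Jensen.
Young's inequality with weights `r = √(1-α)` and `1 - r` turns the compressor bound into
`G⁺ ≤ (1 - θ) G + β L̃² γ² ‖ḡ‖²`. In `Ψ = f - f⋆ + (γ/θ) G` the bound
`γ ≤ (L + L̃ √(2β/θ))⁻¹` makes the `‖ḡ‖²` terms cancel, `γ ≤ θ/(2μ)` lets `γ/2 G` be absorbed by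
the contraction of `(γ/θ) G`, and the PL inequality turns `-γ/2 ‖∇f x‖²` into `-γμ (f x - f⋆)`,
so `Ψ⁺ ≤ (1 - γμ) Ψ`.
-/

open InnerProductSpace Finset
open scoped Gradient

section Jensen

variable {E : Type*} [SeminormedAddCommGroup E] [NormedSpace ℝ E]

theorem sq_norm_smul_sum_le {ι : Type*} (s : Finset ι) (v : ι → E) :
    ‖(1 / (#s : ℝ)) • ∑ i ∈ s, v i‖ ^ 2 ≤ 1 / #s * ∑ i ∈ s, ‖v i‖ ^ 2 := by
  calc ‖(1 / (#s : ℝ)) • ∑ i ∈ s, v i‖ ^ 2 = (‖∑ i ∈ s, v i‖ / #s) ^ 2 := by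
        rw [norm_smul, Real.norm_of_nonneg (by positivity)]; ring
    _ ≤ ((∑ i ∈ s, ‖v i‖) / #s) ^ 2 := by gcongr; exact norm_sum_le _ _
    _ ≤ (∑ i ∈ s, ‖v i‖ ^ 2) / #s := sum_div_card_sq_le_sum_sq_div_card
    _ = 1 / #s * ∑ i ∈ s, ‖v i‖ ^ 2 := by ring

end Jensen

section Calculus

variable {E : Type*} [NormedAddCommGroup E] [InnerProductSpace ℝ E] [CompleteSpace E]

theorem le_add_inner_gradient_add_sq_of_lipschitz {F : E → ℝ} (hF : Differentiable ℝ F) {L : ℝ}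
    (hL : ∀ x y, ‖∇ F x - ∇ F y‖ ≤ L * ‖x - y‖) (x v : E) :
    F (x + v) ≤ F x + ⟪∇ F x, v⟫_ℝ + L / 2 * ‖v‖ ^ 2 := by
  set φ : ℝ → ℝ := fun s => F (x + s • v) - s * ⟪∇ F x, v⟫_ℝ - L / 2 * s ^ 2 * ‖v‖ ^ 2
  have hφ : ∀ s, HasDerivAt φ (⟪∇ F (x + s • v), v⟫_ℝ - ⟪∇ F x, v⟫_ℝ - L * s * ‖v‖ ^ 2) s := by
    intro s
    have hline : HasDerivAt (fun s : ℝ => x + s • v) v s :=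
      ((hasDerivAt_id s).smul_const v).const_add x |>.congr_deriv (one_smul ℝ v)
    have hFline := (hasGradientAt_iff_hasFDerivAt.mp (hF _).hasGradientAt).comp_hasDerivAt s hline
    rw [toDual_apply_apply] at hFline
    refine ((hFline.sub ((hasDerivAt_id s).mul_const ⟪∇ F x, v⟫_ℝ)).sub
      (((hasDerivAt_pow 2 s).const_mul (L / 2)).mul_const (‖v‖ ^ 2))).congr_deriv ?_
    push_cast; ring
  have hanti : AntitoneOn φ (Set.Icc 0 1) := by
    refine antitoneOn_of_deriv_nonpos (convex_Icc 0 1)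
      (fun s _ => (hφ s).continuousAt.continuousWithinAt)
      (fun s _ => (hφ s).differentiableAt.differentiableWithinAt) fun s hs => ?_
    rw [interior_Icc] at hs
    rw [(hφ s).deriv, ← inner_sub_left]
    calc ⟪∇ F (x + s • v) - ∇ F x, v⟫_ℝ - L * s * ‖v‖ ^ 2
        ≤ ‖∇ F (x + s • v) - ∇ F x‖ * ‖v‖ - L * s * ‖v‖ ^ 2 := by
          gcongr; exact real_inner_le_norm _ _
      _ ≤ L * ‖s • v‖ * ‖v‖ - L * s * ‖v‖ ^ 2 := by
          gcongr; simpa using hL (x + s • v) x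
      _ = 0 := by rw [norm_smul, Real.norm_of_nonneg hs.1.le]; ring
  have := hanti (Set.left_mem_Icc.2 zero_le_one) (Set.right_mem_Icc.2 zero_le_one) zero_le_one
  simp only [φ, one_smul, zero_smul, add_zero] at this
  linarith

theorem gradient_const_mul_sum {ι : Type*} (s : Finset ι) {f : ι → E → ℝ} {x : E}
    (hf : ∀ i ∈ s, DifferentiableAt ℝ (f i) x) (c : ℝ) :
    ∇ (fun y => c * ∑ i ∈ s, f i y) x = c • ∑ i ∈ s, ∇ (f i) x := by
  have hfd : fderiv ℝ (fun y => c * ∑ i ∈ s, f i y) x = c • ∑ i ∈ s, fderiv ℝ (f i) x := by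
    rw [fderiv_const_mul (DifferentiableAt.fun_sum hf), fderiv_fun_sum hf]
  rw [gradient, hfd, map_smul, map_sum]
  rfl

theorem descent_step {F : E → ℝ} (hF : Differentiable ℝ F) {L : ℝ}
    (hL : ∀ x y, ‖∇ F x - ∇ F y‖ ≤ L * ‖x - y‖) (x d : E) (γ : ℝ) :
    F (x - γ • d) ≤ F x - γ / 2 * ‖∇ F x‖ ^ 2 - (γ / 2 - L * γ ^ 2 / 2) * ‖d‖ ^ 2
      + γ / 2 * ‖d - ∇ F x‖ ^ 2 := by
  have h := le_add_inner_gradient_add_sq_of_lipschitz hF hL x (-(γ • d))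
  rw [← sub_eq_add_neg, inner_neg_right, real_inner_smul_right, norm_neg, norm_smul, mul_pow,
    Real.norm_eq_abs, sq_abs, real_inner_comm] at h
  linear_combination h - γ / 2 * norm_sub_sq_real d (∇ F x)

end Calculus

theorem add_sq_le_sq_div_add_sq_div {r : ℝ} (hr0 : 0 < r) (hr1 : r < 1) (p q : ℝ) :
    (p + q) ^ 2 ≤ p ^ 2 / r + q ^ 2 / (1 - r) := by
  rw [div_add_div _ _ hr0.ne' (sub_pos.2 hr1).ne', le_div_iff₀ (mul_pos hr0 (sub_pos.2 hr1))]
  nlinarith [sq_nonneg ((1 - r) * p - r * q)]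

theorem mul_add_sq_le_one_of_le_inv {a b γ : ℝ} (ha : 0 ≤ a) (hb : 0 ≤ b) (hγ0 : 0 < γ)
    (hγ : γ ≤ (a + b)⁻¹) : γ * a + (γ * b) ^ 2 ≤ 1 := by
  have hab : 0 < a + b := inv_pos.1 (hγ0.trans_le hγ)
  have hsum : γ * a + γ * b ≤ 1 := by
    rw [← mul_add, ← inv_mul_cancel₀ hab.ne']
    exact mul_le_mul_of_nonneg_right hγ hab.le
  nlinarith [mul_nonneg hγ0.le ha, mul_nonneg hγ0.le hb]

theorem nonneg_of_norm_sub_le_mul {E F : Type*} [NormedAddCommGroup E] [Nontrivial E]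
    [SeminormedAddCommGroup F] {φ : E → F} {K : ℝ} (h : ∀ x y, ‖φ x - φ y‖ ≤ K * ‖x - y‖) :
    0 ≤ K := by
  obtain ⟨x, y, hxy⟩ := exists_pair_ne E
  have hpos : 0 < ‖x - y‖ := norm_pos_iff.2 (sub_ne_zero.2 hxy)
  exact nonneg_of_mul_nonneg_left ((norm_nonneg _).trans (h x y)) hpos

theorem norm_compress_sub_sq_le {E : Type*} [SeminormedAddCommGroup E] {C : E → E} {r : ℝ}
    (hr0 : 0 < r) (hr1 : r < 1) (hC : ∀ x, ‖C x - x‖ ^ 2 ≤ r ^ 2 * ‖x‖ ^ 2) (a b : E) :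
    ‖C (a + b) - (a + b)‖ ^ 2 ≤ r * ‖a‖ ^ 2 + r ^ 2 / (1 - r) * ‖b‖ ^ 2 := by
  calc ‖C (a + b) - (a + b)‖ ^ 2 ≤ r ^ 2 * ‖a + b‖ ^ 2 := hC _
    _ ≤ r ^ 2 * (‖a‖ + ‖b‖) ^ 2 := by gcongr; exact norm_add_le a b
    _ ≤ r ^ 2 * (‖a‖ ^ 2 / r + ‖b‖ ^ 2 / (1 - r)) := by
        gcongr; exact add_sq_le_sq_div_add_sq_div hr0 hr1 _ _
    _ = r * ‖a‖ ^ 2 + r ^ 2 / (1 - r) * ‖b‖ ^ 2 := by field_simp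

section EF21

variable {E : Type*} [NormedAddCommGroup E] [InnerProductSpace ℝ E] [CompleteSpace E] {n : ℕ}

/-- The quantity `G` of the paper. -/
noncomputable def gradientError (f : Fin n → E → ℝ) (g : Fin n → E) (x : E) : ℝ :=
  1 / (n : ℝ) * ∑ i, ‖g i - ∇ (f i) x‖ ^ 2

theorem gradientError_step {f : Fin n → E → ℝ} {L : Fin n → ℝ}
    (hlip : ∀ i x y, ‖∇ (f i) x - ∇ (f i) y‖ ≤ L i * ‖x - y‖) {C : E → E} {r : ℝ}
    (hr0 : 0 < r) (hr1 : r < 1) (hC : ∀ x, ‖C x - x‖ ^ 2 ≤ r ^ 2 * ‖x‖ ^ 2) (g : Fin n → E)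
    (x x' : E) :
    gradientError f (fun i => g i + C (∇ (f i) x' - g i)) x'
      ≤ r * gradientError f g x + r ^ 2 / (1 - r) * (1 / n * ∑ i, L i ^ 2) * ‖x' - x‖ ^ 2 := by
  have hclient : ∀ i, ‖g i + C (∇ (f i) x' - g i) - ∇ (f i) x'‖ ^ 2
      ≤ r * ‖g i - ∇ (f i) x‖ ^ 2 + r ^ 2 / (1 - r) * (L i ^ 2 * ‖x' - x‖ ^ 2) := by
    intro i
    have hsplit : ∇ (f i) x' - g i = (∇ (f i) x - g i) + (∇ (f i) x' - ∇ (f i) x) := by abel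
    have hgrad : ‖∇ (f i) x' - ∇ (f i) x‖ ^ 2 ≤ L i ^ 2 * ‖x' - x‖ ^ 2 := by
      rw [← mul_pow]; exact pow_le_pow_left₀ (norm_nonneg _) (hlip i x' x) 2
    calc ‖g i + C (∇ (f i) x' - g i) - ∇ (f i) x'‖ ^ 2
        = ‖C (∇ (f i) x' - g i) - (∇ (f i) x' - g i)‖ ^ 2 := by congr 2; abel
      _ ≤ r * ‖∇ (f i) x - g i‖ ^ 2 + r ^ 2 / (1 - r) * ‖∇ (f i) x' - ∇ (f i) x‖ ^ 2 := by
        rw [hsplit]; exact norm_compress_sub_sq_le hr0 hr1 hC _ _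
      _ ≤ r * ‖g i - ∇ (f i) x‖ ^ 2 + r ^ 2 / (1 - r) * (L i ^ 2 * ‖x' - x‖ ^ 2) := by
        rw [norm_sub_rev]; gcongr
  calc gradientError f (fun i => g i + C (∇ (f i) x' - g i)) x'
      ≤ 1 / n * ∑ i, (r * ‖g i - ∇ (f i) x‖ ^ 2 + r ^ 2 / (1 - r) * (L i ^ 2 * ‖x' - x‖ ^ 2)) := by
        unfold gradientError; gcongr with i; exact hclient i
    _ = _ := by
        simp only [gradientError, sum_add_distrib, ← mul_sum, ← sum_mul]; ring

theorem ef21_descent {f : Fin n → E → ℝ} (hdiff : ∀ i, Differentiable ℝ (f i)) {F : E → ℝ}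
    (hF : ∀ x, F x = 1 / n * ∑ i, f i x) (hFdiff : Differentiable ℝ F) {Lf : ℝ}
    (hFlip : ∀ x y, ‖∇ F x - ∇ F y‖ ≤ Lf * ‖x - y‖) (g : Fin n → E) (x : E) {γ : ℝ}
    (hγ : 0 ≤ γ) :
    F (x - γ • ((1 / n : ℝ) • ∑ i, g i)) ≤ F x - γ / 2 * ‖∇ F x‖ ^ 2
      - (γ / 2 - Lf * γ ^ 2 / 2) * ‖(1 / n : ℝ) • ∑ i, g i‖ ^ 2 + γ / 2 * gradientError f g x := by
  have hgrad : ∇ F x = (1 / n : ℝ) • ∑ i, ∇ (f i) x := by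
    rw [show F = _ from funext hF]
    exact gradient_const_mul_sum _ (fun i _ => hdiff i x) _
  have herr : ‖(1 / n : ℝ) • ∑ i, g i - ∇ F x‖ ^ 2 ≤ gradientError f g x := by
    rw [hgrad, ← smul_sub, ← sum_sub_distrib]
    simpa [gradientError] using sq_norm_smul_sum_le univ fun i => g i - ∇ (f i) x
  calc _ ≤ _ := descent_step hFdiff hFlip x _ γ
    _ ≤ _ := by gcongr

theorem ef21_lyapunov_step {f : Fin n → E → ℝ} (hdiff : ∀ i, Differentiable ℝ (f i))
    {L : Fin n → ℝ} (hlip : ∀ i x y, ‖∇ (f i) x - ∇ (f i) y‖ ≤ L i * ‖x - y‖) {F : E → ℝ}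
    (hF : ∀ x, F x = 1 / n * ∑ i, f i x) (hFdiff : Differentiable ℝ F) {Lf : ℝ}
    (hFlip : ∀ x y, ‖∇ F x - ∇ F y‖ ≤ Lf * ‖x - y‖) {μ Fstar : ℝ} (hμ : 0 < μ)
    (hPL : ∀ x, F x - Fstar ≤ 1 / (2 * μ) * ‖∇ F x‖ ^ 2) {C : E → E} {θ β γ : ℝ}
    (hθ0 : 0 < θ) (hθ1 : θ < 1) (hC : ∀ x, ‖C x - x‖ ^ 2 ≤ (1 - θ) ^ 2 * ‖x‖ ^ 2)
    (hβ : β = (1 - θ) ^ 2 / θ) (hγ0 : 0 < γ)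
    (hγL : γ * Lf + 2 * β * (1 / n * ∑ i, L i ^ 2) * γ ^ 2 / θ ≤ 1) (hγμ : γ * μ ≤ θ / 2)
    {x x' : E} {g g' : Fin n → E} (hx' : x' = x - γ • ((1 / n : ℝ) • ∑ i, g i))
    (hg' : ∀ i, g' i = g i + C (∇ (f i) x' - g i)) :
    F x' - Fstar + γ / θ * gradientError f g' x'
      ≤ (1 - γ * μ) * (F x - Fstar + γ / θ * gradientError f g x) := by
  set D := ‖(1 / n : ℝ) • ∑ i, g i‖ ^ 2
  set Lt2 := 1 / (n : ℝ) * ∑ i, L i ^ 2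
  have hdesc := ef21_descent hdiff hF hFdiff hFlip g x hγ0.le
  have hcontr := gradientError_step hlip (by linarith) (by linarith) hC g x x'
  rw [sub_sub_cancel, ← hβ, ← funext hg'] at hcontr
  have hstep : ‖x' - x‖ ^ 2 = γ ^ 2 * D := by
    rw [hx', sub_sub_cancel_left, norm_neg, norm_smul, mul_pow, Real.norm_eq_abs, sq_abs]
  have hPLx : γ * μ * (F x - Fstar) ≤ γ / 2 * ‖∇ F x‖ ^ 2 := by
    calc γ * μ * (F x - Fstar) ≤ γ * μ * (1 / (2 * μ) * ‖∇ F x‖ ^ 2) := by gcongr; exact hPL x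
      _ = γ / 2 * ‖∇ F x‖ ^ 2 := by field_simp
  have hDcoef : 0 ≤ (γ / 2 - Lf * γ ^ 2 / 2 - γ / θ * (β * Lt2 * γ ^ 2)) * D := by
    have : γ / 2 - Lf * γ ^ 2 / 2 - γ / θ * (β * Lt2 * γ ^ 2)
        = γ / 2 * (1 - (γ * Lf + 2 * β * Lt2 * γ ^ 2 / θ)) := by ring
    rw [this]; exact mul_nonneg (by nlinarith) (sq_nonneg _)
  have hGcoef : 0 ≤ ((1 - γ * μ) * (γ / θ) - γ / 2 - γ / θ * (1 - θ)) * gradientError f g x := by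
    have : (1 - γ * μ) * (γ / θ) - γ / 2 - γ / θ * (1 - θ) = γ / θ * (θ / 2 - γ * μ) := by
      field_simp; ring
    rw [this]
    refine mul_nonneg (mul_nonneg (by positivity) (by linarith)) ?_
    unfold gradientError; positivity
  have hqcontr := mul_le_mul_of_nonneg_left hcontr (by positivity : 0 ≤ γ / θ)
  rw [← hx'] at hdesc
  rw [hstep] at hqcontr
  linarith

end EF21

theorem EF21_PL_general {d n : ℕ}
    (f : Fin n → EuclideanSpace ℝ (Fin d) → ℝ) (L : Fin n → ℝ) (Lf : ℝ)
    (hdiff : ∀ i, Differentiable ℝ (f i))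
    (hlip : ∀ i x y, ‖gradient (f i) x - gradient (f i) y‖ ≤ L i * ‖x - y‖)
    (F : EuclideanSpace ℝ (Fin d) → ℝ)
    (hF : ∀ x, F x = (1 / (n : ℝ)) * ∑ i, f i x)
    (hFdiff : Differentiable ℝ F)
    (hFlip : ∀ x y, ‖gradient F x - gradient F y‖ ≤ Lf * ‖x - y‖)
    (xstar : EuclideanSpace ℝ (Fin d))
    (μ : ℝ) (hμ : 0 < μ)
    (hPL : ∀ x, F x - F xstar ≤ (1 / (2 * μ)) * ‖gradient F x‖ ^ 2)
    (C : EuclideanSpace ℝ (Fin d) → EuclideanSpace ℝ (Fin d)) (α : ℝ)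
    (hα0 : 0 < α) (hα1 : α < 1)
    (hC : ∀ x, ‖C x - x‖ ^ 2 ≤ (1 - α) * ‖x‖ ^ 2)
    (θ β Lt : ℝ)
    (hθ : θ = 1 - Real.sqrt (1 - α))
    (hβ : β = (1 - α) / (1 - Real.sqrt (1 - α)))
    (hLt : Lt = Real.sqrt ((1 / (n : ℝ)) * ∑ i, (L i) ^ 2))
    (γ : ℝ) (hγ0 : 0 < γ)
    (hγ : γ ≤ min (Lf + Lt * Real.sqrt (2 * β / θ))⁻¹ (θ / (2 * μ)))
    (x : ℕ → EuclideanSpace ℝ (Fin d)) (g : Fin n → ℕ → EuclideanSpace ℝ (Fin d))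
    (hx : ∀ t, x (t + 1) = x t - γ • ((1 / (n : ℝ)) • ∑ i, g i t))
    (hg : ∀ i t, g i (t + 1) = g i t + C (gradient (f i) (x (t + 1)) - g i t))
    (Ψ : ℕ → ℝ)
    (hΨ : ∀ t, Ψ t = F (x t) - F xstar
        + (γ / θ) * ((1 / (n : ℝ)) * ∑ i, ‖g i t - gradient (f i) (x t)‖ ^ 2)) :
    ∀ T : ℕ, Ψ T ≤ (1 - γ * μ) ^ T * Ψ 0 := by
  intro T
  -- On the zero space `Lf` may be negative, but there `Ψ` vanishes identically.
  rcases subsingleton_or_nontrivial (EuclideanSpace ℝ (Fin d)) with hE | hE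
  · have hnorm : ∀ v : EuclideanSpace ℝ (Fin d), ‖v‖ = 0 := fun v => by
      rw [Subsingleton.elim v 0, norm_zero]
    have hΨ0 : ∀ t, Ψ t = 0 := fun t => by simp [hΨ, hnorm, Subsingleton.elim (x t) xstar]
    simp [hΨ0]
  have hsqrt_sq : √(1 - α) ^ 2 = 1 - α := Real.sq_sqrt (by linarith)
  have hsqrt_lt : √(1 - α) < 1 := (Real.sqrt_lt' one_pos).2 (by linarith)
  have hθ0 : 0 < θ := by rw [hθ]; linarith
  have hθ1 : θ < 1 := by rw [hθ]; linarith [Real.sqrt_pos.2 (by linarith : 0 < 1 - α)]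
  have hβ' : β = (1 - θ) ^ 2 / θ := by rw [hβ, hθ, sub_sub_cancel, hsqrt_sq]
  have hC' : ∀ x, ‖C x - x‖ ^ 2 ≤ (1 - θ) ^ 2 * ‖x‖ ^ 2 := by
    rwa [hθ, sub_sub_cancel, hsqrt_sq]
  have hγμ : γ * μ ≤ θ / 2 := by
    have := (le_div_iff₀ (by positivity)).1 (hγ.trans (min_le_right _ _))
    linarith
  have hγL : γ * Lf + 2 * β * (1 / n * ∑ i, L i ^ 2) * γ ^ 2 / θ ≤ 1 := by
    have h := mul_add_sq_le_one_of_le_inv (nonneg_of_norm_sub_le_mul hFlip)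
      (by rw [hLt]; positivity) hγ0 (hγ.trans (min_le_left _ _))
    rw [mul_pow, mul_pow, Real.sq_sqrt (by rw [hβ']; positivity), hLt,
      Real.sq_sqrt (by positivity)] at h
    convert h using 2; ring
  refine le_geom (by linarith) T fun t _ => ?_
  rw [hΨ, hΨ]
  exact ef21_lyapunov_step hdiff hlip hF hFdiff hFlip hμ hPL hθ0 hθ1 hC' hβ' hγ0 hγL hγμ
    (hx t) (fun i => hg i t)

/-- Deterministic EF21 convergence under the Polyak–Łojasiewicz condition. -/
theorem EF21_PL {d n : ℕ} (hn : 0 < n)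
    (f : Fin n → EuclideanSpace ℝ (Fin d) → ℝ) (L : Fin n → ℝ) (Lf : ℝ)
    (hdiff : ∀ i, Differentiable ℝ (f i))
    (hlip : ∀ i x y, ‖gradient (f i) x - gradient (f i) y‖ ≤ L i * ‖x - y‖)
    (F : EuclideanSpace ℝ (Fin d) → ℝ)
    (hF : ∀ x, F x = (1 / (n : ℝ)) * ∑ i, f i x)
    (hFdiff : Differentiable ℝ F)
    (hFlip : ∀ x y, ‖gradient F x - gradient F y‖ ≤ Lf * ‖x - y‖)
    (xstar : EuclideanSpace ℝ (Fin d)) (hmin : ∀ x, F xstar ≤ F x)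
    (μ : ℝ) (hμ : 0 < μ)
    (hPL : ∀ x, F x - F xstar ≤ (1 / (2 * μ)) * ‖gradient F x‖ ^ 2)
    (C : EuclideanSpace ℝ (Fin d) → EuclideanSpace ℝ (Fin d)) (α : ℝ)
    (hα0 : 0 < α) (hα1 : α < 1)
    (hC : ∀ x, ‖C x - x‖ ^ 2 ≤ (1 - α) * ‖x‖ ^ 2)
    (θ β Lt : ℝ)
    (hθ : θ = 1 - Real.sqrt (1 - α))
    (hβ : β = (1 - α) / (1 - Real.sqrt (1 - α)))
    (hLt : Lt = Real.sqrt ((1 / (n : ℝ)) * ∑ i, (L i) ^ 2))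
    (γ : ℝ) (hγ0 : 0 < γ)
    (hγ : γ ≤ min (Lf + Lt * Real.sqrt (2 * β / θ))⁻¹ (θ / (2 * μ)))
    (x : ℕ → EuclideanSpace ℝ (Fin d)) (g : Fin n → ℕ → EuclideanSpace ℝ (Fin d))
    (hx : ∀ t, x (t + 1) = x t - γ • ((1 / (n : ℝ)) • ∑ i, g i t))
    (hg : ∀ i t, g i (t + 1) = g i t + C (gradient (f i) (x (t + 1)) - g i t))
    (Ψ : ℕ → ℝ)
    (hΨ : ∀ t, Ψ t = F (x t) - F xstar
        + (γ / θ) * ((1 / (n : ℝ)) * ∑ i, ‖g i t - gradient (f i) (x t)‖ ^ 2)) :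
    ∀ T : ℕ, Ψ T ≤ (1 - γ * μ) ^ T * Ψ 0 :=
  EF21_PL_general f L Lf hdiff hlip F hF hFdiff hFlip xstar μ hμ hPL C α hα0 hα1 hC θ β Lt hθ hβ hLt
    γ hγ0 hγ x g hx hg Ψ hΨ
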